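/- arXiv:2508.12580 — 5 statements merged into one kernel-verified Lean document; each statement's English description precedes it below -/
import Mathlib

section
/- Let D ∈ {ℝ, ℂ, ℍ}, d = dim_ℝ D, G a finite group, and {f_α : G → D} a family of functions with real components f_α^{(X)} given by f_α(g) = ∑_{X∈I_D} f_α^{(X)}(g) X. Define ⟨f₁,f₂⟩_G = (1/|G|)∑_{g∈G} f₁(g)·conj(f₂(g)). Then the following are equivalent: (1) ⟨f_α^{(X)}, f_β^{(Y)}⟩_G = (1/d)·δ_{αβ}·δ_{XY} for all α,β,X,Y; (2) ⟨f_α, τ_Z ∘ f_β⟩_G = δ_{αβ}·δ_{1Z} for all α,β and Z ∈ I_D. -/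
open scoped Classical

/-- The quaternion `i`. -/
noncomputable def qI : Quaternion ℝ := ⟨0, 1, 0, 0⟩
/-- The quaternion `j`. -/
noncomputable def qJ : Quaternion ℝ := ⟨0, 0, 1, 0⟩
/-- The quaternion `k`. -/
noncomputable def qK : Quaternion ℝ := ⟨0, 0, 0, 1⟩

/-- Partial conjugation on `ℍ`: `τ_Z(x) = Z x Z⁻¹` (the identity for `Z = 1`). -/
noncomputable def tauH (Z x : Quaternion ℝ) : Quaternion ℝ := Z * x * Z⁻¹

/-- The real component of `x ∈ ℍ` along the basis element `X ∈ {1, i, j, k}`. -/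
noncomputable def compH (X x : Quaternion ℝ) : ℝ :=
  if X = 1 then x.re else if X = qI then x.imI else if X = qJ then x.imJ else x.imK

/-- Partial conjugation on `ℂ`: `τ_1 = id`, `τ_i = complex conjugation`. -/
noncomputable def tauC (Z z : ℂ) : ℂ := if Z = 1 then z else starRingEnd ℂ z

/-- The real component of `z ∈ ℂ` along the basis element `X ∈ {1, i}`. -/
noncomputable def compC (X : ℂ) (z : ℂ) : ℝ := if X = 1 then z.re else z.im

@[simp] lemma qI_re : qI.re = 0 := rfl
@[simp] lemma qI_imI : qI.imI = 1 := rfl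
@[simp] lemma qI_imJ : qI.imJ = 0 := rfl
@[simp] lemma qI_imK : qI.imK = 0 := rfl
@[simp] lemma qJ_re : qJ.re = 0 := rfl
@[simp] lemma qJ_imI : qJ.imI = 0 := rfl
@[simp] lemma qJ_imJ : qJ.imJ = 1 := rfl
@[simp] lemma qJ_imK : qJ.imK = 0 := rfl
@[simp] lemma qK_re : qK.re = 0 := rfl
@[simp] lemma qK_imI : qK.imI = 0 := rfl
@[simp] lemma qK_imJ : qK.imJ = 0 := rfl
@[simp] lemma qK_imK : qK.imK = 1 := rfl

lemma qI_ne_one : qI ≠ 1 := by simp [Quaternion.ext_iff, Quaternion.re_one, Quaternion.imI_one, Quaternion.imJ_one, Quaternion.imK_one]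
lemma qJ_ne_one : qJ ≠ 1 := by simp [Quaternion.ext_iff, Quaternion.re_one, Quaternion.imI_one, Quaternion.imJ_one, Quaternion.imK_one]
lemma qK_ne_one : qK ≠ 1 := by simp [Quaternion.ext_iff, Quaternion.re_one, Quaternion.imI_one, Quaternion.imJ_one, Quaternion.imK_one]
lemma qJ_ne_qI : qJ ≠ qI := by simp [Quaternion.ext_iff]
lemma qK_ne_qI : qK ≠ qI := by simp [Quaternion.ext_iff]
lemma qK_ne_qJ : qK ≠ qJ := by simp [Quaternion.ext_iff]
lemma qI_ne_qJ : qI ≠ qJ := qJ_ne_qI.symm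
lemma qI_ne_qK : qI ≠ qK := qK_ne_qI.symm
lemma qJ_ne_qK : qJ ≠ qK := qK_ne_qJ.symm
lemma one_ne_qI : (1:Quaternion ℝ) ≠ qI := qI_ne_one.symm
lemma one_ne_qJ : (1:Quaternion ℝ) ≠ qJ := qJ_ne_one.symm
lemma one_ne_qK : (1:Quaternion ℝ) ≠ qK := qK_ne_one.symm

@[simp] lemma compH_one (x : Quaternion ℝ) : compH 1 x = x.re := by
  simp [compH, one_ne_qI, one_ne_qJ]
@[simp] lemma compH_qI (x : Quaternion ℝ) : compH qI x = x.imI := by simp [compH, qI_ne_one]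
@[simp] lemma compH_qJ (x : Quaternion ℝ) : compH qJ x = x.imJ := by
  simp [compH, qJ_ne_one, qJ_ne_qI]
@[simp] lemma compH_qK (x : Quaternion ℝ) : compH qK x = x.imK := by
  simp [compH, qK_ne_one, qK_ne_qI, qK_ne_qJ]

lemma qI_inv : qI⁻¹ = -qI := by apply inv_eq_of_mul_eq_one_right; ext <;> simp [Quaternion.re_mul, Quaternion.imI_mul, Quaternion.imJ_mul, Quaternion.imK_mul, Quaternion.re_one, Quaternion.imI_one, Quaternion.imJ_one, Quaternion.imK_one]
lemma qJ_inv : qJ⁻¹ = -qJ := by apply inv_eq_of_mul_eq_one_right; ext <;> simp [Quaternion.re_mul, Quaternion.imI_mul, Quaternion.imJ_mul, Quaternion.imK_mul, Quaternion.re_one, Quaternion.imI_one, Quaternion.imJ_one, Quaternion.imK_one]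
lemma qK_inv : qK⁻¹ = -qK := by apply inv_eq_of_mul_eq_one_right; ext <;> simp [Quaternion.re_mul, Quaternion.imI_mul, Quaternion.imJ_mul, Quaternion.imK_mul, Quaternion.re_one, Quaternion.imI_one, Quaternion.imJ_one, Quaternion.imK_one]
lemma tauH_one (x : Quaternion ℝ) : tauH 1 x = x := by simp [tauH]
lemma tauH_qI (x : Quaternion ℝ) : tauH qI x = ⟨x.re, x.imI, -x.imJ, -x.imK⟩ := by
  rw [tauH, qI_inv]; ext <;> simp [Quaternion.re_mul, Quaternion.imI_mul, Quaternion.imJ_mul, Quaternion.imK_mul, Quaternion.re_one, Quaternion.imI_one, Quaternion.imJ_one, Quaternion.imK_one]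
lemma tauH_qJ (x : Quaternion ℝ) : tauH qJ x = ⟨x.re, -x.imI, x.imJ, -x.imK⟩ := by
  rw [tauH, qJ_inv]; ext <;> simp [Quaternion.re_mul, Quaternion.imI_mul, Quaternion.imJ_mul, Quaternion.imK_mul, Quaternion.re_one, Quaternion.imI_one, Quaternion.imJ_one, Quaternion.imK_one]
lemma tauH_qK (x : Quaternion ℝ) : tauH qK x = ⟨x.re, -x.imI, -x.imJ, x.imK⟩ := by
  rw [tauH, qK_inv]; ext <;> simp [Quaternion.re_mul, Quaternion.imI_mul, Quaternion.imJ_mul, Quaternion.imK_mul, Quaternion.re_one, Quaternion.imI_one, Quaternion.imJ_one, Quaternion.imK_one]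

lemma qre_star (x : Quaternion ℝ) : (star x).re = x.re := Quaternion.re_star x
lemma qimI_star (x : Quaternion ℝ) : (star x).imI = -x.imI := Quaternion.imI_star x
lemma qimJ_star (x : Quaternion ℝ) : (star x).imJ = -x.imJ := Quaternion.imJ_star x
lemma qimK_star (x : Quaternion ℝ) : (star x).imK = -x.imK := Quaternion.imK_star x
lemma qmk_re (a b c d : ℝ) : (⟨a,b,c,d⟩ : Quaternion ℝ).re = a := rfl
lemma qmk_imI (a b c d : ℝ) : (⟨a,b,c,d⟩ : Quaternion ℝ).imI = b := rfl
lemma qmk_imJ (a b c d : ℝ) : (⟨a,b,c,d⟩ : Quaternion ℝ).imJ = c := rfl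
lemma qmk_imK (a b c d : ℝ) : (⟨a,b,c,d⟩ : Quaternion ℝ).imK = d := rfl

lemma qre_mul (a b : Quaternion ℝ) : (a * b).re = a.re * b.re - a.imI * b.imI - a.imJ * b.imJ - a.imK * b.imK := Quaternion.re_mul a b
lemma qimI_mul (a b : Quaternion ℝ) : (a * b).imI = a.re * b.imI + a.imI * b.re + a.imJ * b.imK - a.imK * b.imJ := Quaternion.imI_mul a b
lemma qimJ_mul (a b : Quaternion ℝ) : (a * b).imJ = a.re * b.imJ - a.imI * b.imK + a.imJ * b.re + a.imK * b.imI := Quaternion.imJ_mul a b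
lemma qimK_mul (a b : Quaternion ℝ) : (a * b).imK = a.re * b.imK + a.imI * b.imJ - a.imJ * b.imI + a.imK * b.re := Quaternion.imK_mul a b
lemma qre_coe (x : ℝ) : (x : Quaternion ℝ).re = x := rfl
lemma qimI_coe (x : ℝ) : (x : Quaternion ℝ).imI = 0 := rfl
lemma qimJ_coe (x : ℝ) : (x : Quaternion ℝ).imJ = 0 := rfl
lemma qimK_coe (x : ℝ) : (x : Quaternion ℝ).imK = 0 := rfl
lemma qre_one : (1 : Quaternion ℝ).re = 1 := rfl
lemma qimI_one : (1 : Quaternion ℝ).imI = 0 := rfl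
lemma qimJ_one : (1 : Quaternion ℝ).imJ = 0 := rfl
lemma qimK_one : (1 : Quaternion ℝ).imK = 0 := rfl
lemma qre_zero : (0 : Quaternion ℝ).re = 0 := rfl
lemma qimI_zero : (0 : Quaternion ℝ).imI = 0 := rfl
lemma qimJ_zero : (0 : Quaternion ℝ).imJ = 0 := rfl
lemma qimK_zero : (0 : Quaternion ℝ).imK = 0 := rfl

lemma qsmk_re (a b c d : ℝ) : (star ⟨a,b,c,d⟩ : Quaternion ℝ).re = a := Quaternion.re_star _
lemma qsmk_imI (a b c d : ℝ) : (star ⟨a,b,c,d⟩ : Quaternion ℝ).imI = -b := Quaternion.imI_star _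
lemma qsmk_imJ (a b c d : ℝ) : (star ⟨a,b,c,d⟩ : Quaternion ℝ).imJ = -c := Quaternion.imJ_star _
lemma qsmk_imK (a b c d : ℝ) : (star ⟨a,b,c,d⟩ : Quaternion ℝ).imK = -d := Quaternion.imK_star _

@[simp] lemma star_mk (a b c d : ℝ) : star (⟨a,b,c,d⟩ : Quaternion ℝ) = ⟨a,-b,-c,-d⟩ := by ext <;> simp

lemma I_ne_one' : Complex.I ≠ 1 := by simp [Complex.ext_iff]
lemma one_ne_I' : (1:ℂ) ≠ Complex.I := I_ne_one'.symm

lemma tauC_one (z : ℂ) : tauC 1 z = z := by simp [tauC]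
lemma tauC_I (z : ℂ) : tauC Complex.I z = starRingEnd ℂ z := by simp [tauC, I_ne_one']
@[simp] lemma compC_one (z : ℂ) : compC 1 z = z.re := by simp [compC]
@[simp] lemma compC_I (z : ℂ) : compC Complex.I z = z.im := by simp [compC, I_ne_one']

section
variable {G : Type} [Fintype G]
lemma sum_re (F : G → Quaternion ℝ) : (∑ g : G, F g).re = ∑ g : G, (F g).re :=
  map_sum (QuaternionAlgebra.reₗ (-1 : ℝ) (0 : ℝ) (-1 : ℝ)) F Finset.univ
lemma sum_imI (F : G → Quaternion ℝ) : (∑ g : G, F g).imI = ∑ g : G, (F g).imI :=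
  map_sum (QuaternionAlgebra.imIₗ (-1 : ℝ) (0 : ℝ) (-1 : ℝ)) F Finset.univ
lemma sum_imJ (F : G → Quaternion ℝ) : (∑ g : G, F g).imJ = ∑ g : G, (F g).imJ :=
  map_sum (QuaternionAlgebra.imJₗ (-1 : ℝ) (0 : ℝ) (-1 : ℝ)) F Finset.univ
lemma sum_imK (F : G → Quaternion ℝ) : (∑ g : G, F g).imK = ∑ g : G, (F g).imK :=
  map_sum (QuaternionAlgebra.imKₗ (-1 : ℝ) (0 : ℝ) (-1 : ℝ)) F Finset.univ
end

lemma hcastH (n : ℕ) : (n : Quaternion ℝ)⁻¹ = (((n:ℝ)⁻¹ : ℝ) : Quaternion ℝ) := by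
  rw [Quaternion.coe_inv, Quaternion.coe_natCast]
lemma hcastC (n : ℕ) : (n : ℂ)⁻¹ = (((n:ℝ)⁻¹ : ℝ) : ℂ) := by push_cast; ring

set_option maxHeartbeats 2000000 in
/-- For `D ∈ {ℝ, ℂ, ℍ}` and a family `f_α : G → D` with real components
`f_α^{(X)}`, orthonormality of the real components,
`⟨f_α^{(X)}, f_β^{(Y)}⟩_G = (1/d) δ_{αβ} δ_{XY}`, is equivalent to the `D`-valued
orthogonality `⟨f_α, τ_Z ∘ f_β⟩_G = δ_{αβ} δ_{1Z}` of the partial conjugates.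
The three conjuncts treat `D = ℝ`, `D = ℂ`, `D = ℍ`. -/
theorem stmt7 (G : Type) [Group G] [Fintype G] :
    -- D = ℝ : I_D = {1}, d = 1, τ_1 = id
    (∀ (ι : Type) (f : ι → G → ℝ),
      (∀ a b : ι, (Fintype.card G : ℝ)⁻¹ * ∑ g : G, f a g * f b g
          = if a = b then 1 else 0) ↔
      (∀ a b : ι, (Fintype.card G : ℝ)⁻¹ * ∑ g : G, f a g * star (f b g)
          = if a = b then 1 else 0)) ∧
    -- D = ℂ : I_D = {1, i}, d = 2
    (∀ (ι : Type) (f : ι → G → ℂ),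
      (∀ (a b : ι) (X Y : ℂ), (X = 1 ∨ X = Complex.I) → (Y = 1 ∨ Y = Complex.I) →
        (Fintype.card G : ℝ)⁻¹ * ∑ g : G, compC X (f a g) * compC Y (f b g)
          = if a = b ∧ X = Y then (2 : ℝ)⁻¹ else 0) ↔
      (∀ (a b : ι) (Z : ℂ), (Z = 1 ∨ Z = Complex.I) →
        (Fintype.card G : ℂ)⁻¹ * ∑ g : G, f a g * star (tauC Z (f b g))
          = if a = b ∧ Z = 1 then 1 else 0)) ∧
    -- D = ℍ : I_D = {1, i, j, k}, d = 4
    (∀ (ι : Type) (f : ι → G → Quaternion ℝ),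
      (∀ (a b : ι) (X Y : Quaternion ℝ),
        (X = 1 ∨ X = qI ∨ X = qJ ∨ X = qK) → (Y = 1 ∨ Y = qI ∨ Y = qJ ∨ Y = qK) →
        (Fintype.card G : ℝ)⁻¹ * ∑ g : G, compH X (f a g) * compH Y (f b g)
          = if a = b ∧ X = Y then (4 : ℝ)⁻¹ else 0) ↔
      (∀ (a b : ι) (Z : Quaternion ℝ), (Z = 1 ∨ Z = qI ∨ Z = qJ ∨ Z = qK) →
        (Fintype.card G : Quaternion ℝ)⁻¹ * ∑ g : G, f a g * star (tauH Z (f b g))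
          = if a = b ∧ Z = 1 then 1 else 0)) := by
  refine ⟨?_, ?_, ?_⟩
  · intro ι f
    simp only [star_trivial]
  · -- ℂ case
    intro ι f
    constructor
    · intro h a b Z hZ
      rcases eq_or_ne a b with rfl | hab
      · have e00 := (h a a 1 1 (Or.inl rfl) (Or.inl rfl)).trans (if_pos ⟨rfl, rfl⟩)
        have e01 := (h a a 1 Complex.I (Or.inl rfl) (Or.inr rfl)).trans
          (if_neg (fun hc => one_ne_I' hc.2))
        have e10 := (h a a Complex.I 1 (Or.inr rfl) (Or.inl rfl)).trans
          (if_neg (fun hc => I_ne_one' hc.2))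
        have e11 := (h a a Complex.I Complex.I (Or.inr rfl) (Or.inr rfl)).trans
          (if_pos ⟨rfl, rfl⟩)
        simp only [compC_one, compC_I] at e00 e01 e10 e11
        rcases hZ with rfl | rfl
        · rw [if_pos ⟨rfl, rfl⟩, hcastC]
          simp only [tauC_one, Complex.ext_iff, Complex.mul_re, Complex.mul_im, Complex.ofReal_re, Complex.ofReal_im, Complex.re_sum, Complex.im_sum, Complex.star_def, RingHomCompTriple.comp_apply, RingHom.id_apply, starRingEnd_self_apply, Complex.conj_re, Complex.conj_im, mul_neg, neg_mul, neg_neg, sub_neg_eq_add, zero_mul, mul_zero, sub_zero, zero_sub, zero_add, add_zero, Complex.one_re, Complex.one_im, Complex.zero_re, Complex.zero_im, Finset.sum_add_distrib, Finset.sum_sub_distrib, Finset.sum_neg_distrib]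
          constructor <;> linarith
        · rw [if_neg (fun hc => I_ne_one' hc.2), hcastC]
          simp only [tauC_I, Complex.ext_iff, Complex.mul_re, Complex.mul_im, Complex.ofReal_re, Complex.ofReal_im, Complex.re_sum, Complex.im_sum, Complex.star_def, RingHomCompTriple.comp_apply, RingHom.id_apply, starRingEnd_self_apply, Complex.conj_re, Complex.conj_im, mul_neg, neg_mul, neg_neg, sub_neg_eq_add, zero_mul, mul_zero, sub_zero, zero_sub, zero_add, add_zero, Complex.one_re, Complex.one_im, Complex.zero_re, Complex.zero_im, Finset.sum_add_distrib, Finset.sum_sub_distrib, Finset.sum_neg_distrib]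
          constructor <;> linarith
      · have e00 := (h a b 1 1 (Or.inl rfl) (Or.inl rfl)).trans (if_neg (fun hc => hab hc.1))
        have e01 := (h a b 1 Complex.I (Or.inl rfl) (Or.inr rfl)).trans
          (if_neg (fun hc => hab hc.1))
        have e10 := (h a b Complex.I 1 (Or.inr rfl) (Or.inl rfl)).trans
          (if_neg (fun hc => hab hc.1))
        have e11 := (h a b Complex.I Complex.I (Or.inr rfl) (Or.inr rfl)).trans
          (if_neg (fun hc => hab hc.1))
        simp only [compC_one, compC_I] at e00 e01 e10 e11
        rw [if_neg (fun hc => hab hc.1), hcastC]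
        rcases hZ with rfl | rfl
        · simp only [tauC_one, Complex.ext_iff, Complex.mul_re, Complex.mul_im, Complex.ofReal_re, Complex.ofReal_im, Complex.re_sum, Complex.im_sum, Complex.star_def, RingHomCompTriple.comp_apply, RingHom.id_apply, starRingEnd_self_apply, Complex.conj_re, Complex.conj_im, mul_neg, neg_mul, neg_neg, sub_neg_eq_add, zero_mul, mul_zero, sub_zero, zero_sub, zero_add, add_zero, Complex.one_re, Complex.one_im, Complex.zero_re, Complex.zero_im, Finset.sum_add_distrib, Finset.sum_sub_distrib, Finset.sum_neg_distrib]
          constructor <;> linarith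
        · simp only [tauC_I, Complex.ext_iff, Complex.mul_re, Complex.mul_im, Complex.ofReal_re, Complex.ofReal_im, Complex.re_sum, Complex.im_sum, Complex.star_def, RingHomCompTriple.comp_apply, RingHom.id_apply, starRingEnd_self_apply, Complex.conj_re, Complex.conj_im, mul_neg, neg_mul, neg_neg, sub_neg_eq_add, zero_mul, mul_zero, sub_zero, zero_sub, zero_add, add_zero, Complex.one_re, Complex.one_im, Complex.zero_re, Complex.zero_im, Finset.sum_add_distrib, Finset.sum_sub_distrib, Finset.sum_neg_distrib]
          constructor <;> linarith
    · intro h a b X Y hX hY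
      rcases eq_or_ne a b with rfl | hab
      · have h1 := (h a a 1 (Or.inl rfl)).trans (if_pos ⟨rfl, rfl⟩)
        have hI := (h a a Complex.I (Or.inr rfl)).trans (if_neg (fun hc => I_ne_one' hc.2))
        rw [hcastC] at h1 hI
        simp only [tauC_one, tauC_I, Complex.ext_iff, Complex.mul_re, Complex.mul_im, Complex.ofReal_re, Complex.ofReal_im, Complex.re_sum, Complex.im_sum, Complex.star_def, RingHomCompTriple.comp_apply, RingHom.id_apply, starRingEnd_self_apply, Complex.conj_re, Complex.conj_im, mul_neg, neg_mul, neg_neg, sub_neg_eq_add, zero_mul, mul_zero, sub_zero, zero_sub, zero_add, add_zero, Complex.one_re, Complex.one_im, Complex.zero_re, Complex.zero_im, Finset.sum_add_distrib, Finset.sum_sub_distrib, Finset.sum_neg_distrib] at h1 hI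
        obtain ⟨e1, e2⟩ := h1
        obtain ⟨e3, e4⟩ := hI
        rcases hX with rfl | rfl <;> rcases hY with rfl | rfl
        · rw [if_pos ⟨rfl, rfl⟩]; simp only [compC_one]; linarith
        · rw [if_neg (fun hc => one_ne_I' hc.2)]; simp only [compC_one, compC_I]; linarith
        · rw [if_neg (fun hc => I_ne_one' hc.2)]; simp only [compC_one, compC_I]; linarith
        · rw [if_pos ⟨rfl, rfl⟩]; simp only [compC_I]; linarith
      · have h1 := (h a b 1 (Or.inl rfl)).trans (if_neg (fun hc => hab hc.1))
        have hI := (h a b Complex.I (Or.inr rfl)).trans (if_neg (fun hc => hab hc.1))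
        rw [hcastC] at h1 hI
        simp only [tauC_one, tauC_I, Complex.ext_iff, Complex.mul_re, Complex.mul_im, Complex.ofReal_re, Complex.ofReal_im, Complex.re_sum, Complex.im_sum, Complex.star_def, RingHomCompTriple.comp_apply, RingHom.id_apply, starRingEnd_self_apply, Complex.conj_re, Complex.conj_im, mul_neg, neg_mul, neg_neg, sub_neg_eq_add, zero_mul, mul_zero, sub_zero, zero_sub, zero_add, add_zero, Complex.one_re, Complex.one_im, Complex.zero_re, Complex.zero_im, Finset.sum_add_distrib, Finset.sum_sub_distrib, Finset.sum_neg_distrib] at h1 hI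
        obtain ⟨e1, e2⟩ := h1
        obtain ⟨e3, e4⟩ := hI
        rw [if_neg (fun hc => hab hc.1)]
        rcases hX with rfl | rfl <;> rcases hY with rfl | rfl <;>
          simp only [compC_one, compC_I] <;> linarith
  · -- ℍ case
    intro ι f
    constructor
    · intro h a b Z hZ
      rcases eq_or_ne a b with rfl | hab
      · have e00 := (h a a 1 1 (Or.inl rfl) (Or.inl rfl)).trans
          (if_pos ⟨rfl, rfl⟩)
        have e01 := (h a a 1 qI (Or.inl rfl) (Or.inr (Or.inl rfl))).trans
          (if_neg (fun hc => one_ne_qI hc.2))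
        have e02 := (h a a 1 qJ (Or.inl rfl) (Or.inr (Or.inr (Or.inl rfl)))).trans
          (if_neg (fun hc => one_ne_qJ hc.2))
        have e03 := (h a a 1 qK (Or.inl rfl) (Or.inr (Or.inr (Or.inr rfl)))).trans
          (if_neg (fun hc => one_ne_qK hc.2))
        have e10 := (h a a qI 1 (Or.inr (Or.inl rfl)) (Or.inl rfl)).trans
          (if_neg (fun hc => qI_ne_one hc.2))
        have e11 := (h a a qI qI (Or.inr (Or.inl rfl)) (Or.inr (Or.inl rfl))).trans
          (if_pos ⟨rfl, rfl⟩)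
        have e12 := (h a a qI qJ (Or.inr (Or.inl rfl)) (Or.inr (Or.inr (Or.inl rfl)))).trans
          (if_neg (fun hc => qI_ne_qJ hc.2))
        have e13 := (h a a qI qK (Or.inr (Or.inl rfl)) (Or.inr (Or.inr (Or.inr rfl)))).trans
          (if_neg (fun hc => qI_ne_qK hc.2))
        have e20 := (h a a qJ 1 (Or.inr (Or.inr (Or.inl rfl))) (Or.inl rfl)).trans
          (if_neg (fun hc => qJ_ne_one hc.2))
        have e21 := (h a a qJ qI (Or.inr (Or.inr (Or.inl rfl))) (Or.inr (Or.inl rfl))).trans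
          (if_neg (fun hc => qJ_ne_qI hc.2))
        have e22 := (h a a qJ qJ (Or.inr (Or.inr (Or.inl rfl))) (Or.inr (Or.inr (Or.inl rfl)))).trans
          (if_pos ⟨rfl, rfl⟩)
        have e23 := (h a a qJ qK (Or.inr (Or.inr (Or.inl rfl))) (Or.inr (Or.inr (Or.inr rfl)))).trans
          (if_neg (fun hc => qJ_ne_qK hc.2))
        have e30 := (h a a qK 1 (Or.inr (Or.inr (Or.inr rfl))) (Or.inl rfl)).trans
          (if_neg (fun hc => qK_ne_one hc.2))
        have e31 := (h a a qK qI (Or.inr (Or.inr (Or.inr rfl))) (Or.inr (Or.inl rfl))).trans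
          (if_neg (fun hc => qK_ne_qI hc.2))
        have e32 := (h a a qK qJ (Or.inr (Or.inr (Or.inr rfl))) (Or.inr (Or.inr (Or.inl rfl)))).trans
          (if_neg (fun hc => qK_ne_qJ hc.2))
        have e33 := (h a a qK qK (Or.inr (Or.inr (Or.inr rfl))) (Or.inr (Or.inr (Or.inr rfl)))).trans
          (if_pos ⟨rfl, rfl⟩)
        simp only [compH_one, compH_qI, compH_qJ, compH_qK]
          at e00 e01 e02 e03 e10 e11 e12 e13 e20 e21 e22 e23 e30 e31 e32 e33
        rcases hZ with rfl | rfl | rfl | rfl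
        · rw [if_pos ⟨rfl, rfl⟩, hcastH]
          simp only [tauH_one, Quaternion.ext_iff, qre_mul, qimI_mul, qimJ_mul, qimK_mul, qre_coe, qimI_coe, qimJ_coe, qimK_coe, sum_re, sum_imI, sum_imJ, sum_imK, qre_star, qimI_star, qimJ_star, qimK_star, qmk_re, qmk_imI, qmk_imJ, qmk_imK, qsmk_re, qsmk_imI, qsmk_imJ, qsmk_imK, mul_neg, neg_mul, neg_neg, sub_neg_eq_add, zero_mul, mul_zero, neg_zero, add_zero, zero_add, sub_zero, zero_sub, qre_one, qimI_one, qimJ_one, qimK_one, qre_zero, qimI_zero, qimJ_zero, qimK_zero, Finset.sum_add_distrib, Finset.sum_sub_distrib, Finset.sum_neg_distrib]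
          refine ⟨?_, ?_, ?_, ?_⟩ <;> linarith
        · rw [if_neg (fun hc => qI_ne_one hc.2), hcastH]
          simp only [tauH_qI, star_mk, Quaternion.ext_iff, qre_mul, qimI_mul, qimJ_mul, qimK_mul, qre_coe, qimI_coe, qimJ_coe, qimK_coe, sum_re, sum_imI, sum_imJ, sum_imK, qre_star, qimI_star, qimJ_star, qimK_star, qmk_re, qmk_imI, qmk_imJ, qmk_imK, qsmk_re, qsmk_imI, qsmk_imJ, qsmk_imK, mul_neg, neg_mul, neg_neg, sub_neg_eq_add, zero_mul, mul_zero, neg_zero, add_zero, zero_add, sub_zero, zero_sub, qre_one, qimI_one, qimJ_one, qimK_one, qre_zero, qimI_zero, qimJ_zero, qimK_zero, Finset.sum_add_distrib, Finset.sum_sub_distrib, Finset.sum_neg_distrib]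
          refine ⟨?_, ?_, ?_, ?_⟩ <;> linarith
        · rw [if_neg (fun hc => qJ_ne_one hc.2), hcastH]
          simp only [tauH_qJ, star_mk, Quaternion.ext_iff, qre_mul, qimI_mul, qimJ_mul, qimK_mul, qre_coe, qimI_coe, qimJ_coe, qimK_coe, sum_re, sum_imI, sum_imJ, sum_imK, qre_star, qimI_star, qimJ_star, qimK_star, qmk_re, qmk_imI, qmk_imJ, qmk_imK, qsmk_re, qsmk_imI, qsmk_imJ, qsmk_imK, mul_neg, neg_mul, neg_neg, sub_neg_eq_add, zero_mul, mul_zero, neg_zero, add_zero, zero_add, sub_zero, zero_sub, qre_one, qimI_one, qimJ_one, qimK_one, qre_zero, qimI_zero, qimJ_zero, qimK_zero, Finset.sum_add_distrib, Finset.sum_sub_distrib, Finset.sum_neg_distrib]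
          refine ⟨?_, ?_, ?_, ?_⟩ <;> linarith
        · rw [if_neg (fun hc => qK_ne_one hc.2), hcastH]
          simp only [tauH_qK, star_mk, Quaternion.ext_iff, qre_mul, qimI_mul, qimJ_mul, qimK_mul, qre_coe, qimI_coe, qimJ_coe, qimK_coe, sum_re, sum_imI, sum_imJ, sum_imK, qre_star, qimI_star, qimJ_star, qimK_star, qmk_re, qmk_imI, qmk_imJ, qmk_imK, qsmk_re, qsmk_imI, qsmk_imJ, qsmk_imK, mul_neg, neg_mul, neg_neg, sub_neg_eq_add, zero_mul, mul_zero, neg_zero, add_zero, zero_add, sub_zero, zero_sub, qre_one, qimI_one, qimJ_one, qimK_one, qre_zero, qimI_zero, qimJ_zero, qimK_zero, Finset.sum_add_distrib, Finset.sum_sub_distrib, Finset.sum_neg_distrib]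
          refine ⟨?_, ?_, ?_, ?_⟩ <;> linarith
      · have e00 := (h a b 1 1 (Or.inl rfl) (Or.inl rfl)).trans
          (if_neg (fun hc => hab hc.1))
        have e01 := (h a b 1 qI (Or.inl rfl) (Or.inr (Or.inl rfl))).trans
          (if_neg (fun hc => hab hc.1))
        have e02 := (h a b 1 qJ (Or.inl rfl) (Or.inr (Or.inr (Or.inl rfl)))).trans
          (if_neg (fun hc => hab hc.1))
        have e03 := (h a b 1 qK (Or.inl rfl) (Or.inr (Or.inr (Or.inr rfl)))).trans
          (if_neg (fun hc => hab hc.1))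
        have e10 := (h a b qI 1 (Or.inr (Or.inl rfl)) (Or.inl rfl)).trans
          (if_neg (fun hc => hab hc.1))
        have e11 := (h a b qI qI (Or.inr (Or.inl rfl)) (Or.inr (Or.inl rfl))).trans
          (if_neg (fun hc => hab hc.1))
        have e12 := (h a b qI qJ (Or.inr (Or.inl rfl)) (Or.inr (Or.inr (Or.inl rfl)))).trans
          (if_neg (fun hc => hab hc.1))
        have e13 := (h a b qI qK (Or.inr (Or.inl rfl)) (Or.inr (Or.inr (Or.inr rfl)))).trans
          (if_neg (fun hc => hab hc.1))
        have e20 := (h a b qJ 1 (Or.inr (Or.inr (Or.inl rfl))) (Or.inl rfl)).trans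
          (if_neg (fun hc => hab hc.1))
        have e21 := (h a b qJ qI (Or.inr (Or.inr (Or.inl rfl))) (Or.inr (Or.inl rfl))).trans
          (if_neg (fun hc => hab hc.1))
        have e22 := (h a b qJ qJ (Or.inr (Or.inr (Or.inl rfl))) (Or.inr (Or.inr (Or.inl rfl)))).trans
          (if_neg (fun hc => hab hc.1))
        have e23 := (h a b qJ qK (Or.inr (Or.inr (Or.inl rfl))) (Or.inr (Or.inr (Or.inr rfl)))).trans
          (if_neg (fun hc => hab hc.1))
        have e30 := (h a b qK 1 (Or.inr (Or.inr (Or.inr rfl))) (Or.inl rfl)).trans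
          (if_neg (fun hc => hab hc.1))
        have e31 := (h a b qK qI (Or.inr (Or.inr (Or.inr rfl))) (Or.inr (Or.inl rfl))).trans
          (if_neg (fun hc => hab hc.1))
        have e32 := (h a b qK qJ (Or.inr (Or.inr (Or.inr rfl))) (Or.inr (Or.inr (Or.inl rfl)))).trans
          (if_neg (fun hc => hab hc.1))
        have e33 := (h a b qK qK (Or.inr (Or.inr (Or.inr rfl))) (Or.inr (Or.inr (Or.inr rfl)))).trans
          (if_neg (fun hc => hab hc.1))
        simp only [compH_one, compH_qI, compH_qJ, compH_qK]
          at e00 e01 e02 e03 e10 e11 e12 e13 e20 e21 e22 e23 e30 e31 e32 e33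
        rw [if_neg (fun hc => hab hc.1), hcastH]
        rcases hZ with rfl | rfl | rfl | rfl
        · simp only [tauH_one, Quaternion.ext_iff, qre_mul, qimI_mul, qimJ_mul, qimK_mul, qre_coe, qimI_coe, qimJ_coe, qimK_coe, sum_re, sum_imI, sum_imJ, sum_imK, qre_star, qimI_star, qimJ_star, qimK_star, qmk_re, qmk_imI, qmk_imJ, qmk_imK, qsmk_re, qsmk_imI, qsmk_imJ, qsmk_imK, mul_neg, neg_mul, neg_neg, sub_neg_eq_add, zero_mul, mul_zero, neg_zero, add_zero, zero_add, sub_zero, zero_sub, qre_one, qimI_one, qimJ_one, qimK_one, qre_zero, qimI_zero, qimJ_zero, qimK_zero, Finset.sum_add_distrib, Finset.sum_sub_distrib, Finset.sum_neg_distrib]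
          refine ⟨?_, ?_, ?_, ?_⟩ <;> linarith
        · simp only [tauH_qI, star_mk, Quaternion.ext_iff, qre_mul, qimI_mul, qimJ_mul, qimK_mul, qre_coe, qimI_coe, qimJ_coe, qimK_coe, sum_re, sum_imI, sum_imJ, sum_imK, qre_star, qimI_star, qimJ_star, qimK_star, qmk_re, qmk_imI, qmk_imJ, qmk_imK, qsmk_re, qsmk_imI, qsmk_imJ, qsmk_imK, mul_neg, neg_mul, neg_neg, sub_neg_eq_add, zero_mul, mul_zero, neg_zero, add_zero, zero_add, sub_zero, zero_sub, qre_one, qimI_one, qimJ_one, qimK_one, qre_zero, qimI_zero, qimJ_zero, qimK_zero, Finset.sum_add_distrib, Finset.sum_sub_distrib, Finset.sum_neg_distrib]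
          refine ⟨?_, ?_, ?_, ?_⟩ <;> linarith
        · simp only [tauH_qJ, star_mk, Quaternion.ext_iff, qre_mul, qimI_mul, qimJ_mul, qimK_mul, qre_coe, qimI_coe, qimJ_coe, qimK_coe, sum_re, sum_imI, sum_imJ, sum_imK, qre_star, qimI_star, qimJ_star, qimK_star, qmk_re, qmk_imI, qmk_imJ, qmk_imK, qsmk_re, qsmk_imI, qsmk_imJ, qsmk_imK, mul_neg, neg_mul, neg_neg, sub_neg_eq_add, zero_mul, mul_zero, neg_zero, add_zero, zero_add, sub_zero, zero_sub, qre_one, qimI_one, qimJ_one, qimK_one, qre_zero, qimI_zero, qimJ_zero, qimK_zero, Finset.sum_add_distrib, Finset.sum_sub_distrib, Finset.sum_neg_distrib]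
          refine ⟨?_, ?_, ?_, ?_⟩ <;> linarith
        · simp only [tauH_qK, star_mk, Quaternion.ext_iff, qre_mul, qimI_mul, qimJ_mul, qimK_mul, qre_coe, qimI_coe, qimJ_coe, qimK_coe, sum_re, sum_imI, sum_imJ, sum_imK, qre_star, qimI_star, qimJ_star, qimK_star, qmk_re, qmk_imI, qmk_imJ, qmk_imK, qsmk_re, qsmk_imI, qsmk_imJ, qsmk_imK, mul_neg, neg_mul, neg_neg, sub_neg_eq_add, zero_mul, mul_zero, neg_zero, add_zero, zero_add, sub_zero, zero_sub, qre_one, qimI_one, qimJ_one, qimK_one, qre_zero, qimI_zero, qimJ_zero, qimK_zero, Finset.sum_add_distrib, Finset.sum_sub_distrib, Finset.sum_neg_distrib]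
          refine ⟨?_, ?_, ?_, ?_⟩ <;> linarith
    · intro h a b X Y hX hY
      rcases eq_or_ne a b with rfl | hab
      · have h1 := (h a a 1 (Or.inl rfl)).trans (if_pos ⟨rfl, rfl⟩)
        have hI := (h a a qI (Or.inr (Or.inl rfl))).trans (if_neg (fun hc => qI_ne_one hc.2))
        have hJ := (h a a qJ (Or.inr (Or.inr (Or.inl rfl)))).trans
          (if_neg (fun hc => qJ_ne_one hc.2))
        have hK := (h a a qK (Or.inr (Or.inr (Or.inr rfl)))).trans
          (if_neg (fun hc => qK_ne_one hc.2))
        rw [hcastH] at h1 hI hJ hK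
        simp only [tauH_one, tauH_qI, tauH_qJ, tauH_qK, star_mk, Quaternion.ext_iff, qre_mul, qimI_mul, qimJ_mul, qimK_mul, qre_coe, qimI_coe, qimJ_coe, qimK_coe, sum_re, sum_imI, sum_imJ, sum_imK, qre_star, qimI_star, qimJ_star, qimK_star, qmk_re, qmk_imI, qmk_imJ, qmk_imK, qsmk_re, qsmk_imI, qsmk_imJ, qsmk_imK, mul_neg, neg_mul, neg_neg, sub_neg_eq_add, zero_mul, mul_zero, neg_zero, add_zero, zero_add, sub_zero, zero_sub, qre_one, qimI_one, qimJ_one, qimK_one, qre_zero, qimI_zero, qimJ_zero, qimK_zero, Finset.sum_add_distrib, Finset.sum_sub_distrib, Finset.sum_neg_distrib] at h1 hI hJ hK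
        obtain ⟨e1, e2, e3, e4⟩ := h1
        obtain ⟨e5, e6, e7, e8⟩ := hI
        obtain ⟨e9, e10, e11, e12⟩ := hJ
        obtain ⟨e13, e14, e15, e16⟩ := hK
        rcases hX with rfl | rfl | rfl | rfl <;> rcases hY with rfl | rfl | rfl | rfl
        · rw [if_pos ⟨rfl, rfl⟩]; simp only [compH_one]; linarith
        · rw [if_neg (fun hc => one_ne_qI hc.2)]; simp only [compH_one, compH_qI]; linarith
        · rw [if_neg (fun hc => one_ne_qJ hc.2)]; simp only [compH_one, compH_qJ]; linarith
        · rw [if_neg (fun hc => one_ne_qK hc.2)]; simp only [compH_one, compH_qK]; linarith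
        · rw [if_neg (fun hc => qI_ne_one hc.2)]; simp only [compH_qI, compH_one]; linarith
        · rw [if_pos ⟨rfl, rfl⟩]; simp only [compH_qI]; linarith
        · rw [if_neg (fun hc => qI_ne_qJ hc.2)]; simp only [compH_qI, compH_qJ]; linarith
        · rw [if_neg (fun hc => qI_ne_qK hc.2)]; simp only [compH_qI, compH_qK]; linarith
        · rw [if_neg (fun hc => qJ_ne_one hc.2)]; simp only [compH_qJ, compH_one]; linarith
        · rw [if_neg (fun hc => qJ_ne_qI hc.2)]; simp only [compH_qJ, compH_qI]; linarith
        · rw [if_pos ⟨rfl, rfl⟩]; simp only [compH_qJ]; linarith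
        · rw [if_neg (fun hc => qJ_ne_qK hc.2)]; simp only [compH_qJ, compH_qK]; linarith
        · rw [if_neg (fun hc => qK_ne_one hc.2)]; simp only [compH_qK, compH_one]; linarith
        · rw [if_neg (fun hc => qK_ne_qI hc.2)]; simp only [compH_qK, compH_qI]; linarith
        · rw [if_neg (fun hc => qK_ne_qJ hc.2)]; simp only [compH_qK, compH_qJ]; linarith
        · rw [if_pos ⟨rfl, rfl⟩]; simp only [compH_qK]; linarith
      · have h1 := (h a b 1 (Or.inl rfl)).trans (if_neg (fun hc => hab hc.1))
        have hI := (h a b qI (Or.inr (Or.inl rfl))).trans (if_neg (fun hc => hab hc.1))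
        have hJ := (h a b qJ (Or.inr (Or.inr (Or.inl rfl)))).trans
          (if_neg (fun hc => hab hc.1))
        have hK := (h a b qK (Or.inr (Or.inr (Or.inr rfl)))).trans
          (if_neg (fun hc => hab hc.1))
        rw [hcastH] at h1 hI hJ hK
        simp only [tauH_one, tauH_qI, tauH_qJ, tauH_qK, star_mk, Quaternion.ext_iff, qre_mul, qimI_mul, qimJ_mul, qimK_mul, qre_coe, qimI_coe, qimJ_coe, qimK_coe, sum_re, sum_imI, sum_imJ, sum_imK, qre_star, qimI_star, qimJ_star, qimK_star, qmk_re, qmk_imI, qmk_imJ, qmk_imK, qsmk_re, qsmk_imI, qsmk_imJ, qsmk_imK, mul_neg, neg_mul, neg_neg, sub_neg_eq_add, zero_mul, mul_zero, neg_zero, add_zero, zero_add, sub_zero, zero_sub, qre_one, qimI_one, qimJ_one, qimK_one, qre_zero, qimI_zero, qimJ_zero, qimK_zero, Finset.sum_add_distrib, Finset.sum_sub_distrib, Finset.sum_neg_distrib] at h1 hI hJ hK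
        obtain ⟨e1, e2, e3, e4⟩ := h1
        obtain ⟨e5, e6, e7, e8⟩ := hI
        obtain ⟨e9, e10, e11, e12⟩ := hJ
        obtain ⟨e13, e14, e15, e16⟩ := hK
        rw [if_neg (fun hc => hab hc.1)]
        rcases hX with rfl | rfl | rfl | rfl <;> rcases hY with rfl | rfl | rfl | rfl <;>
          simp only [compH_one, compH_qI, compH_qJ, compH_qK] <;> linarith
end

section
/- Let G be a finite group acting orthogonally on V = V₁ ⊕ V₂, an orthogonal direct sum of G-invariant subspaces having no irreducible subrepresentations in common. Suppose x₁ ∈ V₁ and x₂ ∈ V₂ are unit vectors whose orbits Gx₁ ⊂ S(V₁) and Gx₂ ⊂ S(V₂) are spherical 2-designs. Set a = √(dim V₁ / dim V), b = √(dim V₂ / dim V), and x = a x₁ + b x₂. Then ‖x‖ = 1 and the orbit Gx ⊂ S(V) is a spherical 2-design. -/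
open scoped InnerProductSpace


/-- If `V = V₁ ⊕ V₂` is an orthogonal direct sum of `G`-invariant subspaces
with no irreducible subrepresentation in common, and `x₁ ∈ V₁`, `x₂ ∈ V₂` are unit vectors
whose orbits are spherical 2-designs in `V₁` and `V₂` respectively, then with
`a = √(dim V₁ / dim V)`, `b = √(dim V₂ / dim V)`, the vector `x = a x₁ + b x₂` is a unit
vector whose orbit is a spherical 2-design in `V`.  (A 2-design orbit of a unit vector `w`
in `W` means `∑ g, g w = 0` and `(1/|G|) ∑ g, (g w)(g w)ᵀ = (1/dim W)·I_W`.) -/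
theorem stmt9 {G V : Type*} [Group G] [Fintype G]
    [NormedAddCommGroup V] [InnerProductSpace ℝ V] [FiniteDimensional ℝ V]
    (ρ : G →* (V ≃ₗᵢ[ℝ] V)) (V₁ V₂ : Submodule ℝ V)
    (horth : V₂ = V₁ᗮ)
    (hinv1 : ∀ g : G, ∀ x ∈ V₁, ρ g x ∈ V₁)
    (hinv2 : ∀ g : G, ∀ x ∈ V₂, ρ g x ∈ V₂)
    -- no common irreducible subrepresentation: every equivariant map carrying V₁ into V₂
    -- vanishes on V₁
    (hHom : ∀ f : V →ₗ[ℝ] V, (∀ (g : G) (x : V), f (ρ g x) = ρ g (f x)) →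
      (∀ x ∈ V₁, f x ∈ V₂) → ∀ x ∈ V₁, f x = 0)
    (x₁ x₂ : V) (hx₁ : x₁ ∈ V₁) (hx₂ : x₂ ∈ V₂)
    (hx₁n : ‖x₁‖ = 1) (hx₂n : ‖x₂‖ = 1)
    (hd₁ : (∑ g : G, ρ g x₁ = 0) ∧ ∀ y ∈ V₁, ∀ z ∈ V₁,
      (Fintype.card G : ℝ)⁻¹ * ∑ g : G, ⟪ρ g x₁, y⟫_ℝ * ⟪ρ g x₁, z⟫_ℝ
        = (Module.finrank ℝ V₁ : ℝ)⁻¹ * ⟪y, z⟫_ℝ)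
    (hd₂ : (∑ g : G, ρ g x₂ = 0) ∧ ∀ y ∈ V₂, ∀ z ∈ V₂,
      (Fintype.card G : ℝ)⁻¹ * ∑ g : G, ⟪ρ g x₂, y⟫_ℝ * ⟪ρ g x₂, z⟫_ℝ
        = (Module.finrank ℝ V₂ : ℝ)⁻¹ * ⟪y, z⟫_ℝ) :
    ‖Real.sqrt ((Module.finrank ℝ V₁ : ℝ) / (Module.finrank ℝ V)) • x₁ +
        Real.sqrt ((Module.finrank ℝ V₂ : ℝ) / (Module.finrank ℝ V)) • x₂‖ = 1 ∧
    (∑ g : G, ρ g (Real.sqrt ((Module.finrank ℝ V₁ : ℝ) / (Module.finrank ℝ V)) • x₁ +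
        Real.sqrt ((Module.finrank ℝ V₂ : ℝ) / (Module.finrank ℝ V)) • x₂) = 0) ∧
    (∀ y z : V,
      (Fintype.card G : ℝ)⁻¹ * ∑ g : G,
        ⟪ρ g (Real.sqrt ((Module.finrank ℝ V₁ : ℝ) / (Module.finrank ℝ V)) • x₁ +
            Real.sqrt ((Module.finrank ℝ V₂ : ℝ) / (Module.finrank ℝ V)) • x₂), y⟫_ℝ *
        ⟪ρ g (Real.sqrt ((Module.finrank ℝ V₁ : ℝ) / (Module.finrank ℝ V)) • x₁ +
            Real.sqrt ((Module.finrank ℝ V₂ : ℝ) / (Module.finrank ℝ V)) • x₂), z⟫_ℝ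
        = (Module.finrank ℝ V : ℝ)⁻¹ * ⟪y, z⟫_ℝ) := by
  classical
  obtain ⟨hs₁, hq₁⟩ := hd₁
  obtain ⟨hs₂, hq₂⟩ := hd₂
  set a : ℝ := Real.sqrt ((Module.finrank ℝ V₁ : ℝ) / (Module.finrank ℝ V)) with ha
  set b : ℝ := Real.sqrt ((Module.finrank ℝ V₂ : ℝ) / (Module.finrank ℝ V)) with hb
  have hx₁0 : x₁ ≠ 0 := by intro h; rw [h, norm_zero] at hx₁n; norm_num at hx₁n
  have hx₂0 : x₂ ≠ 0 := by intro h; rw [h, norm_zero] at hx₂n; norm_num at hx₂n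
  have hd1pos : 0 < Module.finrank ℝ V₁ := by
    rw [Module.finrank_pos_iff_exists_ne_zero]
    exact ⟨⟨x₁, hx₁⟩, by simpa using hx₁0⟩
  have hd2pos : 0 < Module.finrank ℝ V₂ := by
    rw [Module.finrank_pos_iff_exists_ne_zero]
    exact ⟨⟨x₂, hx₂⟩, by simpa using hx₂0⟩
  have hdsum : Module.finrank ℝ V₁ + Module.finrank ℝ V₂ = Module.finrank ℝ V := by
    rw [horth]; exact V₁.finrank_add_finrank_orthogonal
  have hdpos : 0 < Module.finrank ℝ V := by omega
  have hd1ne : (Module.finrank ℝ V₁ : ℝ) ≠ 0 := Nat.cast_ne_zero.mpr hd1pos.ne'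
  have hd2ne : (Module.finrank ℝ V₂ : ℝ) ≠ 0 := Nat.cast_ne_zero.mpr hd2pos.ne'
  have hdne : (Module.finrank ℝ V : ℝ) ≠ 0 := Nat.cast_ne_zero.mpr hdpos.ne'
  have ha2 : a ^ 2 = (Module.finrank ℝ V₁ : ℝ) / (Module.finrank ℝ V) :=
    Real.sq_sqrt (by positivity)
  have hb2 : b ^ 2 = (Module.finrank ℝ V₂ : ℝ) / (Module.finrank ℝ V) :=
    Real.sq_sqrt (by positivity)
  have hab2 : a ^ 2 + b ^ 2 = 1 := by
    rw [ha2, hb2, ← add_div]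
    rw [show ((Module.finrank ℝ V₁ : ℝ) + Module.finrank ℝ V₂) = (Module.finrank ℝ V : ℝ) by
      exact_mod_cast congrArg (Nat.cast (R := ℝ)) hdsum]
    exact div_self hdne
  have horthxy : ∀ u ∈ V₁, ∀ v ∈ V₂, ⟪u, v⟫_ℝ = 0 := by
    intro u hu v hv
    exact (Submodule.mem_orthogonal V₁ v).1 (horth ▸ hv) u hu
  have hmul : ∀ g h : G, ∀ v : V, ρ (g * h) v = ρ g (ρ h v) := by
    intro g h v; rw [map_mul]; rfl
  -- Part 1: norm
  have hx12 : ⟪x₁, x₂⟫_ℝ = 0 := horthxy x₁ hx₁ x₂ hx₂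
  have hnorm : ‖a • x₁ + b • x₂‖ = 1 := by
    have h2 : ‖a • x₁ + b • x₂‖ ^ 2 = 1 := by
      rw [norm_add_sq_real, real_inner_smul_left, real_inner_smul_right, hx12, norm_smul,
        norm_smul, hx₁n, hx₂n]
      have hA : |a| = a := abs_of_nonneg (Real.sqrt_nonneg _)
      have hB : |b| = b := abs_of_nonneg (Real.sqrt_nonneg _)
      simp only [Real.norm_eq_abs, hA, hB, mul_one, mul_zero]
      nlinarith [hab2]
    nlinarith [norm_nonneg (a • x₁ + b • x₂), h2]
  refine ⟨hnorm, ?_, ?_⟩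
  · simp only [map_add, LinearIsometryEquiv.map_smul, Finset.sum_add_distrib,
      ← Finset.smul_sum, hs₁, hs₂, smul_zero, add_zero]
  -- the equivariant map
  set f : V →ₗ[ℝ] V :=
    { toFun := fun v => ∑ g : G, ⟪ρ g x₁, v⟫_ℝ • ρ g x₂
      map_add' := by
        intro u v
        simp [inner_add_right, add_smul, Finset.sum_add_distrib]
      map_smul' := by
        intro c v
        simp [real_inner_smul_right, smul_smul, Finset.smul_sum] } with hf
  have hfapp : ∀ v : V, f v = ∑ g : G, ⟪ρ g x₁, v⟫_ℝ • ρ g x₂ := fun v => rfl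
  have heq : ∀ (g : G) (v : V), f (ρ g v) = ρ g (f v) := by
    intro g v
    rw [hfapp, hfapp, map_sum]
    simp only [LinearIsometryEquiv.map_smul]
    refine Fintype.sum_equiv (Equiv.mulLeft g⁻¹) _ _ ?_
    intro h
    simp only [Equiv.coe_mulLeft]
    have h2 : ρ g (ρ (g⁻¹ * h) x₂) = ρ h x₂ := by rw [← hmul, mul_inv_cancel_left]
    have h3 : ⟪ρ (g⁻¹ * h) x₁, v⟫_ℝ = ⟪ρ h x₁, ρ g v⟫_ℝ := by
      rw [← (ρ g).inner_map_map (ρ (g⁻¹ * h) x₁) v, ← hmul, mul_inv_cancel_left]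
    rw [h2, h3]
  have hmaps : ∀ v : V, f v ∈ V₂ := by
    intro v
    rw [hfapp]
    exact Submodule.sum_mem _ fun g _ => Submodule.smul_mem _ _ (hinv2 g x₂ hx₂)
  have hvanish : ∀ y ∈ V₁, f y = 0 := hHom f heq (fun x _ => hmaps x)
  have hcross : ∀ y ∈ V₁, ∀ z : V, ∑ g : G, ⟪ρ g x₁, y⟫_ℝ * ⟪ρ g x₂, z⟫_ℝ = 0 := by
    intro y hy z
    have h0 : ⟪f y, z⟫_ℝ = 0 := by rw [hvanish y hy]; simp
    rw [hfapp, sum_inner] at h0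
    simpa [real_inner_smul_left] using h0
  -- Part 3
  intro y z
  obtain ⟨y₁, hy₁, y₂, hy₂', hyd⟩ := V₁.exists_add_mem_mem_orthogonal y
  obtain ⟨z₁, hz₁, z₂, hz₂', hzd⟩ := V₁.exists_add_mem_mem_orthogonal z
  have hy₂ : y₂ ∈ V₂ := horth ▸ hy₂'
  have hz₂ : z₂ ∈ V₂ := horth ▸ hz₂'
  have hkey : ∀ (g : G) (w w₁ w₂ : V), w₁ ∈ V₁ → w₂ ∈ V₂ → w = w₁ + w₂ →
      ⟪ρ g (a • x₁ + b • x₂), w⟫_ℝ = a * ⟪ρ g x₁, w₁⟫_ℝ + b * ⟪ρ g x₂, w₂⟫_ℝ := by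
    intro g w w₁ w₂ hw₁ hw₂ hw
    have h1 : ⟪ρ g x₁, w₂⟫_ℝ = 0 := horthxy _ (hinv1 g x₁ hx₁) _ hw₂
    have h2 : ⟪ρ g x₂, w₁⟫_ℝ = by exact (0 : ℝ) := by
      rw [real_inner_comm]; exact horthxy _ hw₁ _ (hinv2 g x₂ hx₂)
    rw [hw, map_add, LinearIsometryEquiv.map_smul, LinearIsometryEquiv.map_smul]
    simp only [inner_add_left, inner_add_right, real_inner_smul_left, h1, h2]
    ring
  have hAD : ∑ g : G, ⟪ρ g x₁, y₁⟫_ℝ * ⟪ρ g x₂, z₂⟫_ℝ = 0 := hcross y₁ hy₁ z₂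
  have hBC : ∑ g : G, ⟪ρ g x₂, y₂⟫_ℝ * ⟪ρ g x₁, z₁⟫_ℝ = 0 := by
    rw [show (fun g : G => ⟪ρ g x₂, y₂⟫_ℝ * ⟪ρ g x₁, z₁⟫_ℝ)
        = fun g : G => ⟪ρ g x₁, z₁⟫_ℝ * ⟪ρ g x₂, y₂⟫_ℝ from funext fun g => mul_comm _ _]
    exact hcross z₁ hz₁ y₂
  have hAC := hq₁ y₁ hy₁ z₁ hz₁
  have hBD := hq₂ y₂ hy₂ z₂ hz₂
  have hinnerd : ⟪y, z⟫_ℝ = ⟪y₁, z₁⟫_ℝ + ⟪y₂, z₂⟫_ℝ := by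
    have h1 : ⟪y₁, z₂⟫_ℝ = 0 := horthxy _ hy₁ _ hz₂
    have h2 : ⟪y₂, z₁⟫_ℝ = 0 := by
      rw [real_inner_comm]; exact horthxy _ hz₁ _ hy₂
    rw [hyd, hzd]
    simp only [inner_add_left, inner_add_right, h1, h2]
    ring
  have hsplit : ∑ g : G,
      ⟪ρ g (a • x₁ + b • x₂), y⟫_ℝ * ⟪ρ g (a • x₁ + b • x₂), z⟫_ℝ
      = a ^ 2 * ∑ g : G, ⟪ρ g x₁, y₁⟫_ℝ * ⟪ρ g x₁, z₁⟫_ℝ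
        + b ^ 2 * ∑ g : G, ⟪ρ g x₂, y₂⟫_ℝ * ⟪ρ g x₂, z₂⟫_ℝ
        + a * b * ∑ g : G, ⟪ρ g x₁, y₁⟫_ℝ * ⟪ρ g x₂, z₂⟫_ℝ
        + a * b * ∑ g : G, ⟪ρ g x₂, y₂⟫_ℝ * ⟪ρ g x₁, z₁⟫_ℝ := by
    simp only [hkey _ y y₁ y₂ hy₁ hy₂ hyd, hkey _ z z₁ z₂ hz₁ hz₂ hzd, Finset.mul_sum,
      ← Finset.sum_add_distrib]
    exact Finset.sum_congr rfl fun g _ => by ring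
  calc (Fintype.card G : ℝ)⁻¹ * ∑ g : G,
        ⟪ρ g (a • x₁ + b • x₂), y⟫_ℝ * ⟪ρ g (a • x₁ + b • x₂), z⟫_ℝ
      = a ^ 2 * ((Fintype.card G : ℝ)⁻¹ * ∑ g : G, ⟪ρ g x₁, y₁⟫_ℝ * ⟪ρ g x₁, z₁⟫_ℝ)
        + b ^ 2 * ((Fintype.card G : ℝ)⁻¹ * ∑ g : G, ⟪ρ g x₂, y₂⟫_ℝ * ⟪ρ g x₂, z₂⟫_ℝ) := by
        rw [hsplit, hAD, hBC]; ring
    _ = (Module.finrank ℝ V : ℝ)⁻¹ * ⟪y, z⟫_ℝ := by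
        rw [hAC, hBD, hinnerd, ha2, hb2]
        field_simp
end

section
/- Let G be a finite group acting orthogonally on an n-dimensional real inner product space V, and let W ⊂ V be a G-invariant subspace of dimension m. If Gv ⊂ S(V) is a spherical 2-design and w = π_W(v) ≠ 0, then ‖w‖² = m/n. -/
open scoped InnerProductSpace

/-- If `G v ⊂ S(V)` is a spherical 2-design in the `n`-dimensional space `V`,
`W ⊂ V` is a `G`-invariant subspace of dimension `m`, and `w = π_W(v) ≠ 0`, then
`‖w‖² = m / n`. -/
theorem stmt11 {G V : Type*} [Group G] [Fintype G]
    [NormedAddCommGroup V] [InnerProductSpace ℝ V] [FiniteDimensional ℝ V]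
    (ρ : G →* (V ≃ₗᵢ[ℝ] V)) (W : Submodule ℝ V)
    (hinvW : ∀ g : G, ∀ x ∈ W, ρ g x ∈ W)
    (v : V) (hv : ‖v‖ = 1)
    (hdesign : (∑ g : G, ρ g v = 0) ∧ ∀ y z : V,
      (Fintype.card G : ℝ)⁻¹ * ∑ g : G, ⟪ρ g v, y⟫_ℝ * ⟪ρ g v, z⟫_ℝ
        = (Module.finrank ℝ V : ℝ)⁻¹ * ⟪y, z⟫_ℝ)
    (hw : (W.orthogonalProjection v : V) ≠ 0) :
    ‖(W.orthogonalProjection v : V)‖ ^ 2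
      = (Module.finrank ℝ W : ℝ) / (Module.finrank ℝ V : ℝ) := by
  classical
  obtain ⟨-, h2⟩ := hdesign
  set b : OrthonormalBasis (Fin (Module.finrank ℝ W)) ℝ W := stdOrthonormalBasis ℝ W
  -- projection commutes with ρ g
  have hcomm : ∀ g : G, (W.orthogonalProjection (ρ g v) : V)
      = ρ g (W.orthogonalProjection v : V) := by
    intro g
    apply W.eq_starProjection_of_mem_of_inner_eq_zero
    · exact hinvW g _ (W.orthogonalProjection v).2
    · intro w hw'
      have hw'' : (ρ g).symm w ∈ W := by
        have := hinvW g⁻¹ w hw'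
        rwa [map_inv ρ g] at this
      have : ρ g v - ρ g (W.orthogonalProjection v : V)
          = ρ g (v - (W.orthogonalProjection v : V)) := by simp
      rw [this]
      calc ⟪ρ g (v - (W.orthogonalProjection v : V)), w⟫_ℝ
          = ⟪v - (W.orthogonalProjection v : V), (ρ g).symm w⟫_ℝ := by
            rw [← (ρ g).inner_map_map (v - (W.orthogonalProjection v : V)) ((ρ g).symm w)]
            simp
        _ = 0 := W.starProjection_inner_eq_zero v _ hw''
  -- norm of projection via inner products with basis of W
  have hproj : ∀ x : V, ∑ i, ⟪x, (b i : V)⟫_ℝ * ⟪x, (b i : V)⟫_ℝ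
      = ‖(W.orthogonalProjection x : V)‖ ^ 2 := by
    intro x
    have key : ∀ i, ⟪x, (b i : V)⟫_ℝ = ⟪(W.orthogonalProjection x : V), (b i : V)⟫_ℝ := by
      intro i
      have h0 := W.starProjection_inner_eq_zero x (b i : V) (b i).2
      rw [inner_sub_left, sub_eq_zero] at h0
      exact h0
    have hsum := b.sum_inner_mul_inner (W.orthogonalProjection x) (W.orthogonalProjection x)
    have hco : ∀ i, ⟪(W.orthogonalProjection x : V), (b i : V)⟫_ℝ
        = ⟪W.orthogonalProjection x, b i⟫_ℝ := fun i => rfl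
    calc ∑ i, ⟪x, (b i : V)⟫_ℝ * ⟪x, (b i : V)⟫_ℝ
        = ∑ i, ⟪W.orthogonalProjection x, b i⟫_ℝ * ⟪b i, W.orthogonalProjection x⟫_ℝ := by
          refine Finset.sum_congr rfl fun i _ => ?_
          rw [key i, hco i, real_inner_comm (b i)]
      _ = ⟪W.orthogonalProjection x, W.orthogonalProjection x⟫_ℝ := hsum
      _ = ‖(W.orthogonalProjection x : V)‖ ^ 2 := by
          rw [Submodule.coe_inner, real_inner_self_eq_norm_sq, sq]
  have hcard : (0 : ℝ) < (Fintype.card G : ℝ) := by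
    exact_mod_cast Fintype.card_pos
  -- main computation
  have hmain : ∑ i, (Fintype.card G : ℝ)⁻¹ *
      ∑ g : G, ⟪ρ g v, (b i : V)⟫_ℝ * ⟪ρ g v, (b i : V)⟫_ℝ
      = (Module.finrank ℝ W : ℝ) * (Module.finrank ℝ V : ℝ)⁻¹ := by
    have : ∀ i, (Fintype.card G : ℝ)⁻¹ *
        ∑ g : G, ⟪ρ g v, (b i : V)⟫_ℝ * ⟪ρ g v, (b i : V)⟫_ℝ
        = (Module.finrank ℝ V : ℝ)⁻¹ := by
      intro i
      rw [h2 (b i : V) (b i : V)]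
      have : ⟪(b i : V), (b i : V)⟫_ℝ = 1 := by
        rw [real_inner_self_eq_norm_sq]
        have := b.orthonormal.1 i
        rw [Submodule.norm_coe, this]; norm_num
      rw [this, mul_one]
    rw [Finset.sum_congr rfl fun i _ => this i]
    simp [mul_comm]
  -- but also equals ‖π_W v‖²
  have hmain2 : ∑ i, (Fintype.card G : ℝ)⁻¹ *
      ∑ g : G, ⟪ρ g v, (b i : V)⟫_ℝ * ⟪ρ g v, (b i : V)⟫_ℝ
      = ‖(W.orthogonalProjection v : V)‖ ^ 2 := by
    rw [← Finset.mul_sum, Finset.sum_comm]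
    have : ∀ g : G, ∑ i, ⟪ρ g v, (b i : V)⟫_ℝ * ⟪ρ g v, (b i : V)⟫_ℝ
        = ‖(W.orthogonalProjection v : V)‖ ^ 2 := by
      intro g
      rw [hproj (ρ g v), hcomm g]
      simp
    rw [Finset.sum_congr rfl fun g _ => this g]
    rw [Finset.sum_const, Finset.card_univ, nsmul_eq_mul]
    field_simp
  rw [← hmain2, hmain, div_eq_mul_inv]
end

section
/- Let G be a finite group acting orthogonally on an n-dimensional real inner product space V, and W ⊂ V a G-invariant subspace of dimension m. If Gv ⊂ S(V) is a spherical 2-design and w := π_W(v) ≠ 0, then the normalized orbit {gw/‖w‖ : g ∈ G} ⊂ S(W) is a spherical 2-design in W. -/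
open scoped InnerProductSpace

/-- If `G v ⊂ S(V)` is a spherical 2-design, `W ⊂ V` a `G`-invariant
subspace of dimension `m`, and `w = π_W(v) ≠ 0`, then the normalized orbit
`{g (w/‖w‖)}` is a spherical 2-design in `W`: its first moment vanishes and its second
moment operator on `W` equals `(1/m)·I_W`. -/
theorem stmt12 {G V : Type*} [Group G] [Fintype G]
    [NormedAddCommGroup V] [InnerProductSpace ℝ V] [FiniteDimensional ℝ V]
    (ρ : G →* (V ≃ₗᵢ[ℝ] V)) (W : Submodule ℝ V)
    (hinvW : ∀ g : G, ∀ x ∈ W, ρ g x ∈ W)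
    (v : V) (hv : ‖v‖ = 1)
    (hdesign : (∑ g : G, ρ g v = 0) ∧ ∀ y z : V,
      (Fintype.card G : ℝ)⁻¹ * ∑ g : G, ⟪ρ g v, y⟫_ℝ * ⟪ρ g v, z⟫_ℝ
        = (Module.finrank ℝ V : ℝ)⁻¹ * ⟪y, z⟫_ℝ)
    (hw : (W.orthogonalProjectionOnto v : V) ≠ 0) :
    (∑ g : G, ρ g (‖(W.orthogonalProjectionOnto v : V)‖⁻¹ • (W.orthogonalProjectionOnto v : V)) = 0) ∧
    (∀ y ∈ W, ∀ z ∈ W,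
      (Fintype.card G : ℝ)⁻¹ * ∑ g : G,
        ⟪ρ g (‖(W.orthogonalProjectionOnto v : V)‖⁻¹ • (W.orthogonalProjectionOnto v : V)), y⟫_ℝ *
        ⟪ρ g (‖(W.orthogonalProjectionOnto v : V)‖⁻¹ • (W.orthogonalProjectionOnto v : V)), z⟫_ℝ
        = (Module.finrank ℝ W : ℝ)⁻¹ * ⟪y, z⟫_ℝ) := by
  obtain ⟨h1, h2⟩ := hdesign
  set w : V := (W.orthogonalProjectionOnto v : V) with hwdef
  -- the projection commutes with the group action
  have hWperp : ∀ (g : G) (x : V), x ∈ Wᗮ → ρ g x ∈ Wᗮ := by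
    intro g x hx y hy
    have hy' : (ρ g⁻¹) y ∈ W := hinvW g⁻¹ y hy
    have hgy : ρ g ((ρ g⁻¹) y) = y := by
      have : ρ g * ρ g⁻¹ = 1 := by rw [← map_mul, mul_inv_cancel, map_one]
      calc ρ g ((ρ g⁻¹) y) = (ρ g * ρ g⁻¹) y := rfl
        _ = y := by rw [this]; rfl
    have := hx _ hy'
    calc ⟪y, ρ g x⟫_ℝ = ⟪ρ g ((ρ g⁻¹) y), ρ g x⟫_ℝ := by rw [hgy]
      _ = ⟪(ρ g⁻¹) y, x⟫_ℝ := (ρ g).inner_map_map _ _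
      _ = 0 := this
  have hcomm : ∀ (g : G) (x : V),
      (W.orthogonalProjectionOnto (ρ g x) : V) = ρ g (W.orthogonalProjectionOnto x : V) := by
    intro g x
    apply W.eq_starProjection_of_mem_orthogonal
      (hinvW g _ (W.orthogonalProjectionOnto x).2)
    have : ρ g x - ρ g (W.orthogonalProjectionOnto x : V) =
        ρ g (x - (W.orthogonalProjectionOnto x : V)) := by rw [map_sub]
    rw [this]
    exact hWperp g _ (W.sub_starProjection_mem_orthogonal x)
  -- inner products with elements of W
  have hinner : ∀ (g : G) (y : V), y ∈ W → ⟪ρ g w, y⟫_ℝ = ⟪ρ g v, y⟫_ℝ := by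
    intro g y hy
    rw [← hcomm g v]
    have h0 : ⟪ρ g v - (W.orthogonalProjectionOnto (ρ g v) : V), y⟫_ℝ = 0 :=
      W.starProjection_inner_eq_zero (ρ g v) y hy
    have := inner_sub_left (𝕜 := ℝ) (ρ g v) (W.orthogonalProjectionOnto (ρ g v) : V) y
    rw [this] at h0
    linarith
  -- first moment
  have hsum : ∑ g : G, ρ g w = 0 := by
    have h3 : ∑ g : G, ρ g w = ((∑ g : G, W.orthogonalProjectionOnto (ρ g v) : W) : V) := by
      rw [Submodule.coe_sum]
      exact Finset.sum_congr rfl fun g _ => (hcomm g v).symm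
    rw [h3, ← map_sum, h1, map_zero, Submodule.coe_zero]
  have hcard : (0:ℝ) < (Fintype.card G : ℝ) := by
    exact_mod_cast Fintype.card_pos
  -- norm identity ‖w‖² = m / n
  have hnorm : ‖w‖ ^ 2 = (Module.finrank ℝ W : ℝ) / (Module.finrank ℝ V : ℝ) := by
    set b := stdOrthonormalBasis ℝ W with hb
    have hbi : ∀ (g : G) (i), ⟪ρ g v, (b i : V)⟫_ℝ = ⟪ρ g w, (b i : V)⟫_ℝ := fun g i =>
      (hinner g _ (b i).2).symm
    have key : ∑ i, (Fintype.card G : ℝ)⁻¹ *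
        ∑ g : G, ⟪ρ g v, (b i : V)⟫_ℝ * ⟪ρ g v, (b i : V)⟫_ℝ
        = (Module.finrank ℝ W : ℝ) / (Module.finrank ℝ V : ℝ) := by
      have : ∀ i, (Fintype.card G : ℝ)⁻¹ *
          ∑ g : G, ⟪ρ g v, (b i : V)⟫_ℝ * ⟪ρ g v, (b i : V)⟫_ℝ
          = (Module.finrank ℝ V : ℝ)⁻¹ := by
        intro i
        rw [h2 (b i : V) (b i : V), real_inner_self_eq_norm_sq]
        have : ‖(b i : V)‖ = 1 := by
          rw [Submodule.norm_coe]; exact b.orthonormal.1 i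
        rw [this]; ring
      rw [Finset.sum_congr rfl fun i _ => this i, Finset.sum_const, Finset.card_univ]
      simp [div_eq_mul_inv]
    have key2 : ∑ i, (Fintype.card G : ℝ)⁻¹ *
        ∑ g : G, ⟪ρ g v, (b i : V)⟫_ℝ * ⟪ρ g v, (b i : V)⟫_ℝ = ‖w‖ ^ 2 := by
      rw [← Finset.mul_sum, Finset.sum_comm]
      have hg : ∀ g : G, ∑ i, ⟪ρ g v, (b i : V)⟫_ℝ * ⟪ρ g v, (b i : V)⟫_ℝ = ‖w‖ ^ 2 := by
        intro g
        have hmem : ρ g w ∈ W := by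
          rw [← hcomm g v]; exact (W.orthogonalProjectionOnto (ρ g v)).2
        have := b.sum_inner_mul_inner (⟨ρ g w, hmem⟩ : W) (⟨ρ g w, hmem⟩ : W)
        have hco : ∀ i, ⟪(⟨ρ g w, hmem⟩ : W), b i⟫_ℝ = ⟪ρ g w, (b i : V)⟫_ℝ := by
          intro i; rfl
        have hsimp : ∑ i, ⟪ρ g w, (b i : V)⟫_ℝ * ⟪ρ g w, (b i : V)⟫_ℝ = ‖ρ g w‖ ^ 2 := by
          have h2' : ∀ i, ⟪b i, (⟨ρ g w, hmem⟩ : W)⟫_ℝ = ⟪ρ g w, (b i : V)⟫_ℝ := fun i =>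
            real_inner_comm _ _
          simp only [hco, h2'] at this
          rw [this, real_inner_self_eq_norm_sq]
          congr 1
        calc ∑ i, ⟪ρ g v, (b i : V)⟫_ℝ * ⟪ρ g v, (b i : V)⟫_ℝ
            = ∑ i, ⟪ρ g w, (b i : V)⟫_ℝ * ⟪ρ g w, (b i : V)⟫_ℝ := by
              refine Finset.sum_congr rfl fun i _ => by rw [hbi g i]
          _ = ‖ρ g w‖ ^ 2 := hsimp
          _ = ‖w‖ ^ 2 := by rw [(ρ g).norm_map]
      rw [Finset.sum_congr rfl fun g _ => hg g, Finset.sum_const, Finset.card_univ,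
        nsmul_eq_mul]
      field_simp
    rw [← key2, key]
  constructor
  · have hms : ∀ g : G, ρ g (‖w‖⁻¹ • w) = ‖w‖⁻¹ • ρ g w := fun g => (ρ g).map_smul _ _
    rw [Finset.sum_congr rfl fun g _ => hms g, ← Finset.smul_sum, hsum, smul_zero]
  · intro y hy z hz
    have hws : ∀ g : G, ⟪ρ g (‖w‖⁻¹ • w), y⟫_ℝ * ⟪ρ g (‖w‖⁻¹ • w), z⟫_ℝ
        = ‖w‖⁻¹ * ‖w‖⁻¹ * (⟪ρ g v, y⟫_ℝ * ⟪ρ g v, z⟫_ℝ) := by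
      intro g
      have hg : ρ g (‖w‖⁻¹ • w) = ‖w‖⁻¹ • ρ g w := (ρ g).map_smul _ _
      rw [hg, real_inner_smul_left, real_inner_smul_left, hinner g y hy, hinner g z hz]
      ring
    rw [Finset.sum_congr rfl fun g _ => hws g, ← Finset.mul_sum, ← mul_assoc,
      mul_comm ((Fintype.card G : ℝ)⁻¹), mul_assoc, h2 y z]
    have hwn : ‖w‖ ≠ 0 := norm_ne_zero_iff.mpr hw
    have hm : (0:ℝ) < (Module.finrank ℝ W : ℝ) := by
      have hne : (⟨w, (W.orthogonalProjectionOnto v).2⟩ : W) ≠ 0 := by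
        simpa [Submodule.mk_eq_zero] using hw
      have : 0 < Module.finrank ℝ W :=
        Module.finrank_pos_iff.mpr (nontrivial_of_ne _ 0 hne)
      exact_mod_cast this
    have hn : (0:ℝ) < (Module.finrank ℝ V : ℝ) := by
      have hv0 : v ≠ 0 := fun h => by simp [h] at hv
      have : 0 < Module.finrank ℝ V :=
        Module.finrank_pos_iff.mpr (nontrivial_of_ne _ 0 hv0)
      exact_mod_cast this
    have hw2 : ‖w‖⁻¹ * ‖w‖⁻¹ = (Module.finrank ℝ V : ℝ) / (Module.finrank ℝ W : ℝ) := by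
      have : ‖w‖⁻¹ * ‖w‖⁻¹ = (‖w‖ ^ 2)⁻¹ := by rw [sq]; rw [mul_inv]
      rw [this, hnorm]
      rw [inv_div]
    rw [hw2]
    field_simp
end

section
/- Let G be a finite group and ρ : G → O(n) a real irreducible orthogonal representation with End_G(ℝ^n) = ℝ (real type). Let M ∈ Mat_{n×m}(ℝ) with Frobenius norm 1, and let G act on Mat_{n×m}(ℝ) by left multiplication by ρ(g). Then the orbit {ρ(g)M : g ∈ G}, viewed inside ℝ^{nm} with the Frobenius inner product, is a spherical 2-design if and only if M^⊤ M = (1/m)·I_m. -/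
open Matrix

lemma aux_trace_mul_std {m' : Type*} [Fintype m'] [DecidableEq m'] (X : Matrix m' m' ℝ) (i j : m') :
    trace (X * Matrix.single i j (1:ℝ)) = X j i := by
  simp [trace, diag, mul_apply, Matrix.single, ite_and, Finset.sum_ite_eq]

lemma aux_std_transpose {n' m' : Type*} [DecidableEq n'] [DecidableEq m'] (i : n') (j : m') :
    (Matrix.single i j (1:ℝ))ᵀ = Matrix.single j i 1 := by
  ext a b; simp [Matrix.single, transpose_apply, and_comm]

lemma aux_std_mul {l' m' n' : Type*} [Fintype m'] [DecidableEq l'] [DecidableEq m'] [DecidableEq n']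
    (i : l') (j : m') (k : n') :
    Matrix.single i j (1:ℝ) * Matrix.single j k (1:ℝ) = Matrix.single i k 1 := by
  ext a b
  simp only [mul_apply, Matrix.single, of_apply, ite_and, boole_mul, mul_ite, mul_one, mul_zero,
    Finset.sum_ite_eq, Finset.mem_univ, if_true]
  by_cases h1 : i = a <;> by_cases h2 : k = b <;> simp [h1, h2]

lemma aux_mul_std_mul {ι : Type*} [Fintype ι] [DecidableEq ι] (A B : Matrix ι ι ℝ) (s t k ℓ : ι) :
    (A * Matrix.single s t (1:ℝ) * B) k ℓ = A k s * B t ℓ := by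
  simp [mul_apply, Matrix.single, ite_and, Finset.sum_ite_eq, Finset.mul_sum]

lemma aux_trace_std {ι : Type*} [Fintype ι] [DecidableEq ι] (i j : ι) :
    trace (Matrix.single i j (1:ℝ)) = if i = j then 1 else 0 := by
  rcases eq_or_ne i j with h | h
  · subst h; simp
  · simp [h, Matrix.trace_single_eq_of_ne _ _ _ h]

lemma aux_trace_right {n' : Type*} [Fintype n'] (R C : Matrix n' n' ℝ) :
    trace (C * Rᵀ) = ∑ k : n', ∑ s : n', R k s * C k s := by
  simp [trace, diag, mul_apply, transpose_apply, mul_comm]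

/-- Let `ρ : G → O(n)` be a nontrivial real irreducible orthogonal
representation of real type (`End_G(ℝ^n) = ℝ`), and `M ∈ Mat_{n×m}(ℝ)` with Frobenius
norm 1, with `G` acting by left multiplication. Then the orbit `{ρ(g) M}` in
`ℝ^{nm}` (Frobenius inner product) is a spherical 2-design iff `Mᵀ M = (1/m)·I_m`. -/
theorem stmt13 {G : Type*} [Group G] [Fintype G] {n m : ℕ}
    (ρ : G →* Matrix.orthogonalGroup (Fin n) ℝ)
    (hirr : ∀ A : Matrix (Fin n) (Fin n) ℝ,
      (∀ g : G, A * (ρ g : Matrix (Fin n) (Fin n) ℝ) = (ρ g : Matrix (Fin n) (Fin n) ℝ) * A) →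
      ∃ c : ℝ, A = c • (1 : Matrix (Fin n) (Fin n) ℝ))
    (hnontriv : ∃ g : G, (ρ g : Matrix (Fin n) (Fin n) ℝ) ≠ 1)
    (M : Matrix (Fin n) (Fin m) ℝ)
    (hM : ∑ s : Fin n, ∑ i : Fin m, (M s i) ^ 2 = 1) :
    ((∑ g : G, (ρ g : Matrix (Fin n) (Fin n) ℝ) * M = 0) ∧
     (∀ A B : Matrix (Fin n) (Fin m) ℝ,
       (Fintype.card G : ℝ)⁻¹ * ∑ g : G,
         Matrix.trace (((ρ g : Matrix (Fin n) (Fin n) ℝ) * M)ᵀ * A) *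
           Matrix.trace (((ρ g : Matrix (Fin n) (Fin n) ℝ) * M)ᵀ * B)
         = ((n * m : ℕ) : ℝ)⁻¹ * Matrix.trace (Aᵀ * B)))
      ↔ Mᵀ * M = (m : ℝ)⁻¹ • (1 : Matrix (Fin m) (Fin m) ℝ) := by
  classical
  have hm : 0 < m := by
    rcases Nat.eq_zero_or_pos m with h | h
    · subst h; simp at hM
    · exact h
  have hn : 0 < n := by
    rcases Nat.eq_zero_or_pos n with h | h
    · obtain ⟨g, hg⟩ := hnontriv
      refine absurd ?_ hg
      subst h
      ext i j
      exact i.elim0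
    · exact h
  have horth : ∀ g : G, (ρ g : Matrix (Fin n) (Fin n) ℝ)ᵀ * (ρ g : Matrix (Fin n) (Fin n) ℝ) = 1 := by
    intro g
    have h := (ρ g).prop
    rw [Matrix.mem_unitaryGroup_iff'] at h
    rw [← conjTranspose_eq_transpose_of_trivial, ← Matrix.star_eq_conjTranspose, h]
  have hcoe : ∀ h g : G, (ρ (h * g) : Matrix (Fin n) (Fin n) ℝ)
      = (ρ h : Matrix (Fin n) (Fin n) ℝ) * (ρ g : Matrix (Fin n) (Fin n) ℝ) := by
    intro h g; rw [_root_.map_mul]; rfl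
  -- sum of representation matrices is zero
  have hfix : ∀ h : G, (ρ h : Matrix (Fin n) (Fin n) ℝ) * (∑ g : G, (ρ g : Matrix (Fin n) (Fin n) ℝ))
      = ∑ g : G, (ρ g : Matrix (Fin n) (Fin n) ℝ) := by
    intro h
    rw [Finset.mul_sum]
    exact Fintype.sum_equiv (Equiv.mulLeft h) _ _ (fun g => (hcoe h g).symm)
  have hS : (∑ g : G, (ρ g : Matrix (Fin n) (Fin n) ℝ)) = 0 := by
    have hcomm : ∀ h : G, (∑ g : G, (ρ g : Matrix (Fin n) (Fin n) ℝ)) * (ρ h : Matrix (Fin n) (Fin n) ℝ)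
        = (ρ h : Matrix (Fin n) (Fin n) ℝ) * ∑ g : G, (ρ g : Matrix (Fin n) (Fin n) ℝ) := by
      intro h
      rw [hfix h, Finset.sum_mul]
      exact Fintype.sum_equiv (Equiv.mulRight h) _ _ (fun g => (hcoe g h).symm)
    obtain ⟨c, hc⟩ := hirr _ hcomm
    rcases eq_or_ne c 0 with h0 | h0
    · rw [hc, h0, zero_smul]
    · exfalso
      obtain ⟨g₀, hg₀⟩ := hnontriv
      apply hg₀
      have := hfix g₀
      rw [hc, mul_smul_comm, mul_one] at this
      exact smul_right_injective (Matrix (Fin n) (Fin n) ℝ) h0 this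
  -- Schur orthogonality
  have hschur : ∀ s t k ℓ : Fin n,
      (∑ g : G, (ρ g : Matrix (Fin n) (Fin n) ℝ) k s * (ρ g : Matrix (Fin n) (Fin n) ℝ) ℓ t)
        * (n : ℝ)
      = (Fintype.card G : ℝ) * (if k = ℓ then 1 else 0) * (if s = t then 1 else 0) := by
    intro s t k ℓ
    set T := ∑ g : G, (ρ g : Matrix (Fin n) (Fin n) ℝ) * Matrix.single s t (1:ℝ)
        * (ρ g : Matrix (Fin n) (Fin n) ℝ)ᵀ with hTdef
    have hconj : ∀ h : G, (ρ h : Matrix (Fin n) (Fin n) ℝ) * T * (ρ h : Matrix (Fin n) (Fin n) ℝ)ᵀ = T := by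
      intro h
      rw [hTdef, Finset.mul_sum, Finset.sum_mul]
      refine Fintype.sum_equiv (Equiv.mulLeft h) _ _ (fun g => ?_)
      simp only [Equiv.coe_mulLeft, hcoe h g, transpose_mul, Matrix.mul_assoc]
    have hcommT : ∀ h : G, T * (ρ h : Matrix (Fin n) (Fin n) ℝ) = (ρ h : Matrix (Fin n) (Fin n) ℝ) * T := by
      intro h
      have h1 := congrArg (· * (ρ h : Matrix (Fin n) (Fin n) ℝ)) (hconj h)
      simp only [Matrix.mul_assoc, horth h, Matrix.mul_one] at h1
      exact h1.symm
    obtain ⟨c, hc⟩ := hirr T hcommT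
    have htrace : c * n = (Fintype.card G : ℝ) * (if s = t then 1 else 0) := by
      have h1 : trace T = (Fintype.card G : ℝ) * (if s = t then 1 else 0) := by
        rw [hTdef, trace_sum]
        have : ∀ g : G, trace ((ρ g : Matrix (Fin n) (Fin n) ℝ) * Matrix.single s t (1:ℝ)
            * (ρ g : Matrix (Fin n) (Fin n) ℝ)ᵀ) = if s = t then 1 else 0 := by
          intro g
          rw [trace_mul_cycle, horth g, Matrix.one_mul, aux_trace_std]
        simp [this]
      rw [hc] at h1
      rw [← h1, trace_smul, trace_one, smul_eq_mul]
      simp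
    have hentry : (∑ g : G, (ρ g : Matrix (Fin n) (Fin n) ℝ) k s * (ρ g : Matrix (Fin n) (Fin n) ℝ) ℓ t)
        = c * (if k = ℓ then 1 else 0) := by
      have h1 : T k ℓ = ∑ g : G, (ρ g : Matrix (Fin n) (Fin n) ℝ) k s * (ρ g : Matrix (Fin n) (Fin n) ℝ) ℓ t := by
        rw [hTdef, Matrix.sum_apply]
        refine Finset.sum_congr rfl fun g _ => ?_
        rw [aux_mul_std_mul, transpose_apply]
      rw [← h1, hc, Matrix.smul_apply, one_apply, smul_eq_mul]
    rw [hentry]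
    rcases eq_or_ne k ℓ with hkl | hkl
    · subst hkl
      simpa using htrace
    · simp [hkl]
  -- expansion of the trace inner product
  have htr : ∀ (g : G) (A : Matrix (Fin n) (Fin m) ℝ),
      trace (((ρ g : Matrix (Fin n) (Fin n) ℝ) * M)ᵀ * A)
        = ∑ p : Fin n × Fin n, (ρ g : Matrix (Fin n) (Fin n) ℝ) p.1 p.2 * (A * Mᵀ) p.1 p.2 := by
    intro g A
    rw [transpose_mul, trace_mul_cycle, aux_trace_right, Fintype.sum_prod_type]
  have hkey : ∀ A B : Matrix (Fin n) (Fin m) ℝ,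
      (∑ g : G, trace (((ρ g : Matrix (Fin n) (Fin n) ℝ) * M)ᵀ * A)
          * trace (((ρ g : Matrix (Fin n) (Fin n) ℝ) * M)ᵀ * B)) * (n : ℝ)
      = (Fintype.card G : ℝ) * trace ((Mᵀ * M) * (Aᵀ * B)) := by
    intro A B
    have h1 : ∀ g : G, trace (((ρ g : Matrix (Fin n) (Fin n) ℝ) * M)ᵀ * A)
          * trace (((ρ g : Matrix (Fin n) (Fin n) ℝ) * M)ᵀ * B)
        = ∑ p : Fin n × Fin n, ∑ q : Fin n × Fin n,
            ((A * Mᵀ) p.1 p.2 * (B * Mᵀ) q.1 q.2)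
              * ((ρ g : Matrix (Fin n) (Fin n) ℝ) p.1 p.2 * (ρ g : Matrix (Fin n) (Fin n) ℝ) q.1 q.2) := by
      intro g
      rw [htr g A, htr g B, Finset.sum_mul_sum]
      exact Finset.sum_congr rfl fun p _ => Finset.sum_congr rfl fun q _ => by ring
    have h2 : (∑ g : G, trace (((ρ g : Matrix (Fin n) (Fin n) ℝ) * M)ᵀ * A)
          * trace (((ρ g : Matrix (Fin n) (Fin n) ℝ) * M)ᵀ * B))
        = ∑ p : Fin n × Fin n, ∑ q : Fin n × Fin n,
            ((A * Mᵀ) p.1 p.2 * (B * Mᵀ) q.1 q.2)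
              * ∑ g : G, (ρ g : Matrix (Fin n) (Fin n) ℝ) p.1 p.2 * (ρ g : Matrix (Fin n) (Fin n) ℝ) q.1 q.2 := by
      simp_rw [h1, Finset.mul_sum]
      rw [Finset.sum_comm]
      refine Finset.sum_congr rfl fun p _ => ?_
      rw [Finset.sum_comm]
    rw [h2, Finset.sum_mul]
    have h3 : ∀ p : Fin n × Fin n,
        (∑ q : Fin n × Fin n, ((A * Mᵀ) p.1 p.2 * (B * Mᵀ) q.1 q.2)
            * ∑ g : G, (ρ g : Matrix (Fin n) (Fin n) ℝ) p.1 p.2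
              * (ρ g : Matrix (Fin n) (Fin n) ℝ) q.1 q.2) * (n : ℝ)
        = (Fintype.card G : ℝ) * ((A * Mᵀ) p.1 p.2 * (B * Mᵀ) p.1 p.2) := by
      intro p
      rw [Finset.sum_mul]
      have : ∀ q : Fin n × Fin n, (((A * Mᵀ) p.1 p.2 * (B * Mᵀ) q.1 q.2)
            * ∑ g : G, (ρ g : Matrix (Fin n) (Fin n) ℝ) p.1 p.2
              * (ρ g : Matrix (Fin n) (Fin n) ℝ) q.1 q.2) * (n : ℝ)
          = ((A * Mᵀ) p.1 p.2 * (B * Mᵀ) q.1 q.2) * ((Fintype.card G : ℝ)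
              * (if p.1 = q.1 then 1 else 0) * (if p.2 = q.2 then 1 else 0)) := by
        intro q
        rw [mul_assoc, hschur p.2 q.2 p.1 q.1]
      simp_rw [this]
      rw [Fintype.sum_prod_type]
      simp only [mul_ite, ite_mul, mul_one, mul_zero, one_mul, zero_mul, Finset.sum_ite_eq,
        Finset.mem_univ, if_true, Finset.sum_ite_irrel, Finset.sum_const_zero]
      ring
    calc (∑ p : Fin n × Fin n, (∑ q : Fin n × Fin n, ((A * Mᵀ) p.1 p.2 * (B * Mᵀ) q.1 q.2)
            * ∑ g : G, (ρ g : Matrix (Fin n) (Fin n) ℝ) p.1 p.2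
              * (ρ g : Matrix (Fin n) (Fin n) ℝ) q.1 q.2) * (n : ℝ))
        = ∑ p : Fin n × Fin n, (Fintype.card G : ℝ) * ((A * Mᵀ) p.1 p.2 * (B * Mᵀ) p.1 p.2) :=
          Finset.sum_congr rfl fun p _ => h3 p
      _ = (Fintype.card G : ℝ) * ∑ p : Fin n × Fin n, (A * Mᵀ) p.1 p.2 * (B * Mᵀ) p.1 p.2 := by
          rw [Finset.mul_sum]
      _ = (Fintype.card G : ℝ) * trace ((Mᵀ * M) * (Aᵀ * B)) := by
          congr 1
          rw [Fintype.sum_prod_type]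
          rw [show (∑ k : Fin n, ∑ s : Fin n, (A * Mᵀ) k s * (B * Mᵀ) k s)
              = trace ((B * Mᵀ) * (A * Mᵀ)ᵀ) from (aux_trace_right _ _).symm]
          rw [transpose_mul, transpose_transpose]
          rw [trace_mul_comm]
          simp only [← Matrix.mul_assoc]
          rw [trace_mul_comm, ← Matrix.mul_assoc]
          simp only [Matrix.mul_assoc]
  have hcard : (Fintype.card G : ℝ) ≠ 0 := Nat.cast_ne_zero.2 Fintype.card_ne_zero
  have hn0 : (n : ℝ) ≠ 0 := Nat.cast_ne_zero.2 hn.ne'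
  have hm0 : (m : ℝ) ≠ 0 := Nat.cast_ne_zero.2 hm.ne'
  have hfinal : ((∑ g : G, (ρ g : Matrix (Fin n) (Fin n) ℝ) * M = 0) ∧
     (∀ A B : Matrix (Fin n) (Fin m) ℝ,
       (Fintype.card G : ℝ)⁻¹ * ∑ g : G,
         Matrix.trace (((ρ g : Matrix (Fin n) (Fin n) ℝ) * M)ᵀ * A) *
           Matrix.trace (((ρ g : Matrix (Fin n) (Fin n) ℝ) * M)ᵀ * B)
         = ((n * m : ℕ) : ℝ)⁻¹ * Matrix.trace (Aᵀ * B)))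
      ↔ Mᵀ * M = (m : ℝ)⁻¹ • (1 : Matrix (Fin m) (Fin m) ℝ) := by
    constructor
    · rintro ⟨-, h2⟩
      ext i j
      set k0 : Fin n := ⟨0, hn⟩
      have h := h2 (Matrix.single k0 j 1) (Matrix.single k0 i 1)
      have e1 := hkey (Matrix.single k0 j 1) (Matrix.single k0 i 1)
      rw [aux_std_transpose] at h e1
      rw [aux_std_mul] at h e1
      rw [aux_trace_mul_std] at e1
      rw [aux_trace_std] at h
      have hx : (Mᵀ * M) i j
          = (Fintype.card G : ℝ)⁻¹ * ((∑ g : G,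
              Matrix.trace (((ρ g : Matrix (Fin n) (Fin n) ℝ) * M)ᵀ * Matrix.single k0 j (1:ℝ)) *
              Matrix.trace (((ρ g : Matrix (Fin n) (Fin n) ℝ) * M)ᵀ * Matrix.single k0 i (1:ℝ))) * (n : ℝ)) := by
        rw [e1]; field_simp
      rw [Matrix.smul_apply, one_apply, smul_eq_mul]
      rw [hx, ← mul_assoc, h]
      push_cast
      rcases eq_or_ne i j with hij | hij
      · subst hij; simp; field_simp
      · simp [hij, Ne.symm hij]
    · intro hMM
      refine ⟨?_, ?_⟩
      · rw [← Matrix.sum_mul, hS, Matrix.zero_mul]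
      · intro A B
        have e1 := hkey A B
        rw [hMM, Matrix.smul_mul, Matrix.one_mul, trace_smul, smul_eq_mul] at e1
        have hx : (∑ g : G,
              Matrix.trace (((ρ g : Matrix (Fin n) (Fin n) ℝ) * M)ᵀ * A) *
              Matrix.trace (((ρ g : Matrix (Fin n) (Fin n) ℝ) * M)ᵀ * B))
            = (Fintype.card G : ℝ) * ((m : ℝ)⁻¹ * trace (Aᵀ * B)) * (n : ℝ)⁻¹ := by
          field_simp at e1 ⊢
          linarith [e1]
        rw [hx]
        push_cast
        rw [mul_inv]
        field_simp
        try ring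
        try tauto
  exact hfinal
end
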